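/- arXiv:2310.06430 — 2 statements merged into one kernel-verified Lean document; each statement's English description precedes it below -/
import Mathlib

section
/- For exchangeable real random variables s₁,…,s_{n+1}, if τ is the ⌈(n+1)(1−α)⌉-th smallest value among s₁,…,s_n,∞ (i.e., τ = s_{(⌈(n+1)(1−α)⌉)} when ⌈(n+1)(1−α)⌉ ≤ n), then ℙ(s_{n+1} ≤ τ) ≥ 1−α. -/
open MeasureTheory
open scoped Classical ENNReal

/-- Key counting fact: for any `x : Fin N → ℝ` and `j ≤ N`, at least `j` indices `m`
have fewer than `j` values strictly below `x m`. -/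
lemma conformal_count_lemma {N j : ℕ} (hj : j ≤ N) (x : Fin N → ℝ) :
    j ≤ (Finset.univ.filter (fun m : Fin N =>
      (Finset.univ.filter (fun i => x i < x m)).card < j)).card := by
  by_contra h
  push_neg at h
  set S := Finset.univ.filter (fun m : Fin N =>
      (Finset.univ.filter (fun i => x i < x m)).card < j) with hS
  have hTne : (Finset.univ \ S).Nonempty := by
    rw [← Finset.card_pos, Finset.card_sdiff_of_subset (Finset.subset_univ S)]
    simp only [Finset.card_univ, Fintype.card_fin]
    omega
  obtain ⟨m₀, hm₀T, hm₀min⟩ := Finset.exists_min_image (Finset.univ \ S) x hTne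
  have hm₀ : ¬ ((Finset.univ.filter (fun i => x i < x m₀)).card < j) := by
    have := Finset.mem_sdiff.mp hm₀T
    simpa [hS] using this.2
  apply hm₀
  calc (Finset.univ.filter (fun i => x i < x m₀)).card
      ≤ S.card := by
        apply Finset.card_le_card
        intro i hi
        simp only [Finset.mem_filter, Finset.mem_univ, true_and] at hi
        by_contra hiS
        have : i ∈ Finset.univ \ S := Finset.mem_sdiff.mpr ⟨Finset.mem_univ i, hiS⟩
        exact absurd (hm₀min i this) (not_le.mpr hi)
    _ < j := h

lemma conformal_filter_card_perm {N : ℕ} (p : Fin N → Prop) [DecidablePred p]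
    (σ : Equiv.Perm (Fin N)) :
    (Finset.univ.filter (fun i => p (σ i))).card = (Finset.univ.filter p).card := by
  apply Finset.card_bij (fun i _ => σ i)
  · intro a ha; simp only [Finset.mem_filter, Finset.mem_univ, true_and] at ha ⊢; exact ha
  · intro a _ b _ h; exact σ.injective h
  · intro b hb
    simp only [Finset.mem_filter, Finset.mem_univ, true_and] at hb
    exact ⟨σ.symm b, by simp [hb], by simp⟩

/-- Split conformal prediction coverage guarantee: for exchangeable
real random variables `s₁,…,s_{n+1}`, if `τ` is the `⌈(n+1)(1−α)⌉`-th smallest value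
among `s₁,…,s_n` (characterized as the least `t` with at least `⌈(n+1)(1−α)⌉` of the
first `n` values `≤ t`), then `ℙ(s_{n+1} ≤ τ) ≥ 1−α`. -/
theorem split_conformal_coverage
    {Ω : Type*} [MeasurableSpace Ω] (μ : Measure Ω) [IsProbabilityMeasure μ]
    (n : ℕ) (hn : 1 ≤ n) (α : ℝ) (hα : α ∈ Set.Ioo (0:ℝ) 1)
    (s : Fin (n+1) → Ω → ℝ) (hmeas : ∀ i, Measurable (s i))
    (hexch : ∀ σ : Equiv.Perm (Fin (n+1)),
      Measure.map (fun ω => fun i => s (σ i) ω) μ =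
        Measure.map (fun ω => fun i => s i ω) μ)
    (j : ℕ) (hj : j = ⌈((n:ℝ) + 1) * (1 - α)⌉₊) (hjn : j ≤ n)
    (τ : Ω → ℝ)
    (hτ : ∀ ω, τ ω = sInf {t : ℝ |
      j ≤ (Finset.univ.filter (fun i : Fin n => s i.castSucc ω ≤ t)).card}) :
    ENNReal.ofReal (1 - α) ≤ μ {ω | s (Fin.last n) ω ≤ τ ω} := by
  -- the joint random vector and its law
  set f : Ω → (Fin (n+1) → ℝ) := fun ω i => s i ω with hfdef
  have hf : Measurable f := measurable_pi_lambda _ hmeas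
  set ν : Measure (Fin (n+1) → ℝ) := Measure.map f μ with hνdef
  haveI hνprob : IsProbabilityMeasure ν := Measure.isProbabilityMeasure_map hf.aemeasurable
  -- the "rank below j" events
  set B : Fin (n+1) → Set (Fin (n+1) → ℝ) := fun m =>
    {x | (Finset.univ.filter (fun i => x i < x m)).card < j} with hBdef
  have hc : ∀ m, Measurable (fun x : Fin (n+1) → ℝ =>
      (Finset.univ.filter (fun i => x i < x m)).card) := by
    intro m
    have heq : (fun x : Fin (n+1) → ℝ => (Finset.univ.filter (fun i => x i < x m)).card)
        = fun x => ∑ i : Fin (n+1), if x i < x m then 1 else 0 := by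
      funext x; rw [Finset.card_filter]
    rw [heq]
    exact Finset.measurable_sum _ fun i _ =>
      Measurable.ite (measurableSet_lt (measurable_pi_apply i) (measurable_pi_apply m))
        measurable_const measurable_const
  have hB : ∀ m, MeasurableSet (B m) := fun m =>
    (hc m) (show MeasurableSet {k : ℕ | k < j} from .of_discrete)
  -- permutation invariance: all events have the same probability
  have hBeq : ∀ m, ν (B m) = ν (B (Fin.last n)) := by
    intro m
    set σ : Equiv.Perm (Fin (n+1)) := Equiv.swap (Fin.last n) m with hσdef
    set g : (Fin (n+1) → ℝ) → (Fin (n+1) → ℝ) := fun x i => x (σ i) with hgdef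
    have hg : Measurable g := measurable_pi_lambda _ fun i => measurable_pi_apply _
    have hmapg : Measure.map g ν = ν := by
      rw [hνdef, Measure.map_map hg hf]
      exact hexch σ
    have hgpre : g ⁻¹' (B (Fin.last n)) = B m := by
      ext x
      simp only [hBdef, Set.mem_preimage, Set.mem_setOf_eq, hgdef]
      have hcards : (Finset.univ.filter (fun i => x (σ i) < x (σ (Fin.last n)))).card
          = (Finset.univ.filter (fun i => x i < x m)).card := by
        simp only [hσdef, Equiv.swap_apply_left]
        exact conformal_filter_card_perm (fun i => x i < x m) (Equiv.swap (Fin.last n) m)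
      rw [hcards]
    calc ν (B m) = ν (g ⁻¹' (B (Fin.last n))) := by rw [hgpre]
      _ = (Measure.map g ν) (B (Fin.last n)) := (Measure.map_apply hg (hB _)).symm
      _ = ν (B (Fin.last n)) := by rw [hmapg]
  -- lower bound on the sum of probabilities
  have hsum : (j : ℝ≥0∞) ≤ ∑ m : Fin (n+1), ν (B m) := by
    have hpt : ∀ x, (j:ℝ≥0∞) ≤ ∑ m : Fin (n+1), (B m).indicator 1 x := by
      intro x
      have hcard : j ≤ (Finset.univ.filter (fun m => x ∈ B m)).card := by
        have := conformal_count_lemma (Nat.le_succ_of_le hjn) x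
        simpa [hBdef] using this
      have hind : ∑ m : Fin (n+1), (B m).indicator (1 : (Fin (n+1) → ℝ) → ℝ≥0∞) x
          = ((Finset.univ.filter (fun m => x ∈ B m)).card : ℝ≥0∞) := by
        rw [Finset.card_filter]
        push_cast
        refine Finset.sum_congr rfl fun m _ => ?_
        simp [Set.indicator_apply]
      rw [hind]
      exact_mod_cast hcard
    calc (j : ℝ≥0∞) = ∫⁻ _, (j:ℝ≥0∞) ∂ν := by simp
      _ ≤ ∫⁻ x, ∑ m : Fin (n+1), (B m).indicator 1 x ∂ν := lintegral_mono hpt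
      _ = ∑ m : Fin (n+1), ∫⁻ x, (B m).indicator 1 x ∂ν :=
          lintegral_finset_sum _ fun m _ => measurable_one.indicator (hB m)
      _ = ∑ m : Fin (n+1), ν (B m) :=
          Finset.sum_congr rfl fun m _ => lintegral_indicator_one (hB m)
  have hsum' : (j : ℝ≥0∞) ≤ ((n:ℝ≥0∞)+1) * ν (B (Fin.last n)) := by
    calc (j : ℝ≥0∞) ≤ ∑ m : Fin (n+1), ν (B m) := hsum
      _ = ∑ _m : Fin (n+1), ν (B (Fin.last n)) := Finset.sum_congr rfl fun m _ => hBeq m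
      _ = ((n:ℝ≥0∞)+1) * ν (B (Fin.last n)) := by
          rw [Finset.sum_const, Finset.card_univ, Fintype.card_fin, nsmul_eq_mul]
          push_cast
          ring
  -- probability bound for the last-index event
  have hBlast : ENNReal.ofReal (1 - α) ≤ ν (B (Fin.last n)) := by
    have hne : ((n:ℝ≥0∞)+1) ≠ 0 := by simp
    have hnt : ((n:ℝ≥0∞)+1) ≠ ⊤ := by simp
    rw [← ENNReal.mul_le_mul_iff_right hne hnt]
    refine le_trans ?_ hsum'
    have h2 : ((n:ℝ)+1) * (1-α) ≤ j := by rw [hj]; exact Nat.le_ceil _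
    calc ((n:ℝ≥0∞)+1) * ENNReal.ofReal (1-α)
        = ENNReal.ofReal (((n:ℝ)+1) * (1-α)) := by
          rw [ENNReal.ofReal_mul (by positivity)]
          congr 1
          rw [ENNReal.ofReal_add (by positivity) zero_le_one]
          simp
      _ ≤ (j : ℝ≥0∞) := by
          rw [← ENNReal.ofReal_natCast j]
          exact ENNReal.ofReal_le_ofReal h2
  -- the event is contained in the coverage event
  have hincl : f ⁻¹' (B (Fin.last n)) ⊆ {ω | s (Fin.last n) ω ≤ τ ω} := by
    intro ω hω
    simp only [hBdef, Set.mem_preimage, Set.mem_setOf_eq, hfdef] at hω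
    have hcnt : (Finset.univ.filter
        (fun i : Fin n => s i.castSucc ω < s (Fin.last n) ω)).card < j := by
      have hsplit : (Finset.univ.filter
            (fun i : Fin (n+1) => s i ω < s (Fin.last n) ω)).card =
          (Finset.univ.filter
            (fun i : Fin n => s i.castSucc ω < s (Fin.last n) ω)).card := by
        rw [Finset.card_filter, Finset.card_filter, Fin.sum_univ_castSucc]
        simp
      omega
    show s (Fin.last n) ω ≤ τ ω
    rw [hτ ω]
    haveI : Nonempty (Fin n) := ⟨⟨0, hn⟩⟩
    apply le_csInf
    · set t₀ : ℝ := (Finset.univ : Finset (Fin n)).sup' Finset.univ_nonempty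
          (fun i : Fin n => s i.castSucc ω) with ht₀
      refine ⟨t₀, ?_⟩
      simp only [Set.mem_setOf_eq]
      have : Finset.univ.filter (fun i : Fin n => s i.castSucc ω ≤ t₀) =
          Finset.univ := by
        apply Finset.filter_true_of_mem
        intro i _
        rw [ht₀]
        exact Finset.le_sup' (fun i : Fin n => s i.castSucc ω) (Finset.mem_univ i)
      rw [this, Finset.card_univ, Fintype.card_fin]
      exact hjn
    · intro t ht
      simp only [Set.mem_setOf_eq] at ht
      by_contra hlt
      push_neg at hlt
      have hsub : Finset.univ.filter (fun i : Fin n => s i.castSucc ω ≤ t) ⊆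
          Finset.univ.filter (fun i : Fin n => s i.castSucc ω < s (Fin.last n) ω) := by
        exact Finset.monotone_filter_right _ (fun i _ hi => lt_of_le_of_lt hi hlt)
      have := Finset.card_le_card hsub
      omega
  -- conclude
  calc ENNReal.ofReal (1 - α) ≤ ν (B (Fin.last n)) := hBlast
    _ = μ (f ⁻¹' (B (Fin.last n))) := Measure.map_apply hf (hB _)
    _ ≤ μ {ω | s (Fin.last n) ω ≤ τ ω} := measure_mono hincl
end

section
/- Monotonicity of set size in model accuracy for APS without probability values: if two accuracy sequences satisfy A_r ≥ A'_r for all r (model A at least as accurate as model A' at every top-r level), and k, k' are the respective integers with A_{k−1} < 1−α ≤ A_k and A'_{k'−1} < 1−α ≤ A'_{k'}, then the expected set size k − 1 + (1−α−A_{k−1})/(A_k−A_{k−1}) is at most k' − 1 + (1−α−A'_{k'−1})/(A'_{k'}−A'_{k'−1}) provided k < k' or (k = k' and the comparison holds), in particular k ≤ k'. -/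
/-- Monotonicity of the expected set size of APS without probability
values in model accuracy: if `A_r ≥ A'_r` for all `r`, then `k ≤ k'` and the
expected set size of the more accurate model is no larger. -/
theorem expected_set_size_monotone_in_accuracy
    (A A' : ℕ → ℝ) (hA0 : A 0 = 0) (hA'0 : A' 0 = 0)
    (hmono : Monotone A) (hmono' : Monotone A')
    (hrange : ∀ r, A r ∈ Set.Icc (0:ℝ) 1) (hrange' : ∀ r, A' r ∈ Set.Icc (0:ℝ) 1)
    (hdom : ∀ r, A' r ≤ A r)
    (α : ℝ) (hα : α ∈ Set.Ioo (0:ℝ) 1)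
    (k k' : ℕ) (hk1 : 1 ≤ k) (hk'1 : 1 ≤ k')
    (hlow : A (k-1) < 1 - α) (hhigh : 1 - α ≤ A k)
    (hlow' : A' (k'-1) < 1 - α) (hhigh' : 1 - α ≤ A' k') :
    k ≤ k' ∧
      (k:ℝ) - 1 + (1 - α - A (k-1)) / (A k - A (k-1)) ≤
        (k':ℝ) - 1 + (1 - α - A' (k'-1)) / (A' k' - A' (k'-1)) := by
  have hkk' : k ≤ k' := by
    by_contra h
    push_neg at h
    have hk'le : k' ≤ k - 1 := by omega
    have h1 := hmono hk'le
    linarith [hdom k']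
  refine ⟨hkk', ?_⟩
  have hbA : A (k-1) < A k := lt_of_lt_of_le hlow hhigh
  have hbA' : A' (k'-1) < A' k' := lt_of_lt_of_le hlow' hhigh'
  have hr1 : (1 - α - A (k-1)) / (A k - A (k-1)) ≤ 1 := by
    rw [div_le_one (by linarith)]; linarith
  have hr2 : 0 < (1 - α - A' (k'-1)) / (A' k' - A' (k'-1)) :=
    div_pos (by linarith) (by linarith)
  rcases eq_or_lt_of_le hkk' with heq | hlt
  · subst heq
    have hda : A' (k-1) ≤ A (k-1) := hdom _
    have hdb : A' k ≤ A k := hdom _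
    have key : (1 - α - A (k-1)) / (A k - A (k-1)) ≤
        (1 - α - A' (k-1)) / (A' k - A' (k-1)) := by
      rw [div_le_div_iff₀ (by linarith) (by linarith)]
      nlinarith [mul_nonneg (sub_nonneg.2 hda) (sub_nonneg.2 hhigh'),
        mul_nonneg (sub_nonneg.2 hda) (sub_nonneg.2 hdb)]
    linarith
  · have hkc : (k:ℝ) ≤ (k':ℝ) - 1 := by
      have : k + 1 ≤ k' := hlt
      have := (Nat.cast_le (α := ℝ)).2 this
      push_cast at this
      linarith
    linarith
end
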